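/- Let Ω be an alternating (m+1)-form of comass ≤ 1 on an inner product space V, and let u_1, ..., u_m, ν be an orthonormal system with Ω(ν, u_1, ..., u_m) = 1. Then for every vector W orthogonal to the span of {u_1,...,u_m}: (a) Ω(W, ν, u_1, ..., u_{m-1}) = 0 (and similarly with any m−1 of the u_i), and (b) Ω(W, u_1, ..., u_m) = ⟨W, ν⟩. -/

import Mathlib

open RealInnerProductSpace

/-!
Write `W = ⟪W, ν⟫ ν + w` with `w` orthogonal to `ν` and to all `u i`. Everything reduces to
`Ω(w, t) = 0` whenever `(x, t)` is an orthonormal frame with `|Ω(x, t)| = 1` and `w ⟂ x, t`: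
the vectors `x + s w` are orthogonal to `t`, so comass `≤ 1` gives
`(Ω(x, t) + s Ω(w, t))² ≤ ‖x + s w‖² = 1 + s² ‖w‖²` for every real `s`, and a quadratic in `s`
without constant term can only be nonnegative if its linear coefficient `2 Ω(x, t) Ω(w, t)`
vanishes. For (a) the `ν`-component of `W` dies by alternation, and the frame is the one with
`ν` and `u j` transposed.
-/

theorem Orthonormal.update {𝕜 E ι : Type*} [RCLike 𝕜] [NormedAddCommGroup E]
    [InnerProductSpace 𝕜 E] [DecidableEq ι] {v : ι → E} (hv : Orthonormal 𝕜 v) {i : ι} {y : E}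
    (hy : ‖y‖ = 1) (hyv : ∀ k ≠ i, inner 𝕜 y (v k) = 0) :
    Orthonormal 𝕜 (Function.update v i y) := by
  refine ⟨fun k => ?_, fun k l hkl => ?_⟩
  · rcases eq_or_ne k i with rfl | hk
    · simpa using hy
    · simpa [Function.update_of_ne hk] using hv.1 k
  · rcases eq_or_ne k i with rfl | hk
    · simpa [Function.update_of_ne hkl.symm] using hyv l hkl.symm
    rcases eq_or_ne l i with rfl | hl
    · simpa [Function.update_of_ne hk] using inner_eq_zero_symm.mp (hyv k hk)
    · simpa [Function.update_of_ne hk, Function.update_of_ne hl] using hv.2 hkl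

theorem Orthonormal.inner_sub_inner_smul_eq_zero {E ι : Type*} [NormedAddCommGroup E]
    [InnerProductSpace ℝ E] {v : ι → E} (hv : Orthonormal ℝ v) {i : ι} {x : E}
    (hx : ∀ k ≠ i, ⟪x, v k⟫ = 0) (k : ι) : ⟪x - ⟪x, v i⟫ • v i, v k⟫ = 0 := by
  classical
  rw [inner_sub_left, real_inner_smul_left, orthonormal_iff_ite.mp hv]
  rcases eq_or_ne k i with rfl | hk
  · simp
  · simp [hx k hk, hk.symm]

section Comass

variable {V ι : Type*} [NormedAddCommGroup V] [InnerProductSpace ℝ V] [DecidableEq ι]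

theorem MultilinearMap.abs_apply_update_le_norm (Ω : MultilinearMap ℝ (fun _ : ι => V) ℝ)
    (hcomass : ∀ v : ι → V, Orthonormal ℝ v → |Ω v| ≤ 1) {v : ι → V} (hv : Orthonormal ℝ v)
    {i : ι} {y : V} (hyv : ∀ k ≠ i, ⟪y, v k⟫ = 0) : |Ω (Function.update v i y)| ≤ ‖y‖ := by
  rcases eq_or_ne y 0 with rfl | hy
  · simp
  have hy' : ‖y‖ ≠ 0 := norm_ne_zero_iff.mpr hy
  have hunit : Orthonormal ℝ (Function.update v i (‖y‖⁻¹ • y)) :=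
    hv.update (by simp [norm_smul, hy'])
      fun k hk => by rw [real_inner_smul_left, hyv k hk, mul_zero]
  have hscale : Ω (Function.update v i y) = ‖y‖ * Ω (Function.update v i (‖y‖⁻¹ • y)) := by
    rw [Ω.map_update_smul, smul_eq_mul, mul_inv_cancel_left₀ hy']
  rw [hscale, abs_mul, abs_norm]
  exact mul_le_of_le_one_right (norm_nonneg y) (hcomass _ hunit)

theorem MultilinearMap.apply_update_eq_zero_of_forall_inner_eq_zero
    (Ω : MultilinearMap ℝ (fun _ : ι => V) ℝ)
    (hcomass : ∀ v : ι → V, Orthonormal ℝ v → |Ω v| ≤ 1) {v : ι → V} (hv : Orthonormal ℝ v)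
    (hΩv : |Ω v| = 1) {w : V} (hw : ∀ k, ⟪w, v k⟫ = 0) (i : ι) :
    Ω (Function.update v i w) = 0 := by
  set c := Ω (Function.update v i w)
  have hΩv2 : Ω v ^ 2 = 1 := by rw [← sq_abs, hΩv, one_pow]
  have hbound : ∀ s : ℝ, 0 ≤ (‖w‖ ^ 2 - c ^ 2) * (s * s) + (-2 * Ω v * c) * s + 0 := by
    intro s
    have hperp : ⟪v i, s • w⟫ = 0 := by
      rw [real_inner_smul_right, real_inner_comm, hw i, mul_zero]
    have hnorm : ‖v i + s • w‖ ^ 2 = 1 + s ^ 2 * ‖w‖ ^ 2 := by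
      rw [sq, norm_add_sq_eq_norm_sq_add_norm_sq_real hperp, hv.1 i, norm_smul,
        Real.norm_eq_abs, ← sq_abs s]
      ring
    have hlin : Ω (Function.update v i (v i + s • w)) = Ω v + s * c := by
      rw [Ω.map_update_add, Ω.map_update_smul, Function.update_eq_self, smul_eq_mul]
    have hle := Ω.abs_apply_update_le_norm hcomass hv (i := i) (y := v i + s • w)
      fun k hk => by
        rw [inner_add_left, real_inner_smul_left, hw k, mul_zero, add_zero]
        exact hv.2 hk.symm
    have hsq := pow_le_pow_left₀ (abs_nonneg _) hle 2
    rw [sq_abs, hlin, hnorm] at hsq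
    nlinarith
  have hdisc := discrim_le_zero hbound
  unfold discrim at hdisc
  nlinarith [sq_nonneg c]

theorem MultilinearMap.apply_update_eq_inner_mul (Ω : MultilinearMap ℝ (fun _ : ι => V) ℝ)
    (hcomass : ∀ v : ι → V, Orthonormal ℝ v → |Ω v| ≤ 1) {v : ι → V} (hv : Orthonormal ℝ v)
    (hΩv : |Ω v| = 1) {i : ι} {x : V} (hx : ∀ k ≠ i, ⟪x, v k⟫ = 0) :
    Ω (Function.update v i x) = ⟪x, v i⟫ * Ω v := by
  conv_lhs => rw [← add_sub_cancel (⟪x, v i⟫ • v i) x]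
  rw [Ω.map_update_add, Ω.map_update_smul, Function.update_eq_self,
    Ω.apply_update_eq_zero_of_forall_inner_eq_zero hcomass hv hΩv
      (hv.inner_sub_inner_smul_eq_zero hx), smul_eq_mul, add_zero]

theorem AlternatingMap.apply_update_update_self_eq_zero (Ω : V [⋀^ι]→ₗ[ℝ] ℝ)
    (hcomass : ∀ v : ι → V, Orthonormal ℝ v → |Ω v| ≤ 1) {v : ι → V} (hv : Orthonormal ℝ v)
    (hΩv : |Ω v| = 1) {i l : ι} (hil : i ≠ l) {x : V} (hx : ∀ k ≠ i, ⟪x, v k⟫ = 0) :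
    Ω (Function.update (Function.update v i x) l (v i)) = 0 := by
  have hswap : |Ω (v ∘ Equiv.swap i l)| = 1 := by rw [Ω.map_swap _ hil, abs_neg, hΩv]
  have hrest : Ω (Function.update (Function.update v l (v i)) i (x - ⟪x, v i⟫ • v i)) = 0 := by
    -- `update v l (v i)` agrees with the frame `v ∘ swap i l` outside slot `i`
    rw [← Function.update_idem (v l), ← Equiv.comp_swap_eq_update]
    exact Ω.toMultilinearMap.apply_update_eq_zero_of_forall_inner_eq_zero hcomass
      (hv.comp _ (Equiv.injective _)) hswap (fun k => hv.inner_sub_inner_smul_eq_zero hx _) i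
  have hrepeat : Ω (Function.update (Function.update v l (v i)) i (v i)) = 0 :=
    Ω.map_eq_zero_of_eq _ (i := i) (j := l) (by simp [Function.update_of_ne hil.symm]) hil
  rw [Function.update_comm hil, ← add_sub_cancel (⟪x, v i⟫ • v i) x, Ω.map_update_add,
    Ω.map_update_smul, hrest, hrepeat, smul_zero, add_zero]

end Comass

/-- Let `Ω` be an alternating `(m+1)`-form of comass `≤ 1` on a real inner product space `V`,
and let `ν, u₁, …, u_m` be an orthonormal system with `Ω(ν, u₁, …, u_m) = 1`.  Then for every
vector `W` orthogonal to all the `u i`: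
(a) `Ω(W, u₁, …, ν, …, u_m) = 0` where `ν` replaces any one `u j` (equivalently, up to sign,
`Ω(W, ν, u₁, …, ûⱼ, …, u_m) = 0` for any omission of one of the `u i`), and
(b) `Ω(W, u₁, …, u_m) = ⟪W, ν⟫`. -/
theorem calibrated_extended_tangent_space_contractions
    {V : Type*} [NormedAddCommGroup V] [InnerProductSpace ℝ V]
    {m : ℕ} (Ω : AlternatingMap ℝ V ℝ (Fin (m + 1)))
    (hcomass : ∀ v : Fin (m + 1) → V, Orthonormal ℝ v → |Ω v| ≤ 1)
    (ν : V) (u : Fin m → V) (hON : Orthonormal ℝ (Fin.cons ν u : Fin (m + 1) → V))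
    (hcal : Ω (Fin.cons ν u) = 1)
    (W : V) (hW : ∀ i, ⟪W, u i⟫ = 0) :
    (∀ j : Fin m, Ω (Fin.cons W (Function.update u j ν)) = 0) ∧
    Ω (Fin.cons W u) = ⟪W, ν⟫ := by
  have hΩ : |Ω (Fin.cons ν u)| = 1 := by rw [hcal, abs_one]
  have hW_frame : ∀ k ≠ 0, ⟪W, (Fin.cons ν u : Fin (m + 1) → V) k⟫ = 0 := by
    intro k hk
    obtain ⟨k, rfl⟩ := Fin.exists_succ_eq.mpr hk
    simpa using hW k
  refine ⟨fun j => ?_, ?_⟩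
  · rw [Fin.cons_update, ← Fin.update_cons_zero (α := fun _ => V) ν u W]
    exact Ω.apply_update_update_self_eq_zero hcomass hON hΩ (Fin.succ_ne_zero j).symm hW_frame
  · simpa [hcal] using Ω.toMultilinearMap.apply_update_eq_inner_mul hcomass hON hΩ hW_frame
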